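/- Let p, g ∈ [0,1], x ∈ [0,1], n ≥ 1, and let Φₙ be the n-fold product channel of the damping-dephasing channel F_{p,g}. Let M be the matrix indexed by Fin 2 × (Fin n → Fin 2) with entries M((i,s),(j,t)) = √(xᵢ·xⱼ)·Φₙ(E_{ij})(s,t), where x₀ = x, x₁ = 1−x, and E_{ij} is the matrix unit at (constant-i string, constant-j string). Set α = x + (1−x)(1−g)ⁿ and β = x(1−x)·((1−g)ⁿ − ((1−2p)²(1−g))ⁿ). Then the characteristic polynomial of M equals X^{2ⁿ−1} · (X² − α·X + β) · ∏_{w=0}^{n−1} (X − (1−x)·g^{n−w}(1−g)^{w})^{C(n,w)}. -/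

import Mathlib

open Matrix BigOperators Polynomial

noncomputable section

/-- Matrix of the Kraus operator `K_u` acting on `n` systems. -/
def krausAt {ι : Type*} {d n : ℕ} (K : ι → Matrix (Fin d) (Fin d) ℂ) (u : Fin n → ι) :
    Matrix (Fin n → Fin d) (Fin n → Fin d) ℂ :=
  Matrix.of fun s t => ∏ i, K (u i) (s i) (t i)

/-- The n-fold product (i.i.d.) channel of the Kraus operators `K`. -/
def prodChannel {ι : Type*} [Fintype ι] {d : ℕ} (K : ι → Matrix (Fin d) (Fin d) ℂ) (n : ℕ)
    (ρ : Matrix (Fin n → Fin d) (Fin n → Fin d) ℂ) :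
    Matrix (Fin n → Fin d) (Fin n → Fin d) ℂ :=
  ∑ u : Fin n → ι, krausAt K u * ρ * (krausAt K u)ᴴ

/-- Kraus operators of the damping-dephasing channel `F_{p,g}`. -/
def ddKraus (p g : ℝ) : Fin 3 → Matrix (Fin 2) (Fin 2) ℂ
  | 0 => (Real.sqrt (1 - p) : ℂ) • !![1, 0; 0, (Real.sqrt (1 - g) : ℂ)]
  | 1 => (Real.sqrt g : ℂ) • !![0, 1; 0, 0]
  | 2 => (Real.sqrt p : ℂ) • !![1, 0; 0, -(Real.sqrt (1 - g) : ℂ)]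

open ComplexConjugate
lemma mul_std_mul {m : Type*} [Fintype m] [DecidableEq m] (A B : Matrix m m ℂ) (i j s t : m) :
    (A * Matrix.single i j (1:ℂ) * Bᴴ) s t = A s i * conj (B t j) := by
  simp [Matrix.mul_apply, Matrix.single, Matrix.conjTranspose_apply, ite_and,
    Finset.sum_ite_eq, Finset.mul_sum, Finset.sum_mul]

lemma prodChannel_std {ι : Type*} [Fintype ι] {d n : ℕ} (K : ι → Matrix (Fin d) (Fin d) ℂ)
    (i j : Fin d) (s t : Fin n → Fin d) :
    prodChannel K n (Matrix.single (fun _ => i) (fun _ => j) 1) s t =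
      ∏ k : Fin n, ∑ v : ι, K v (s k) i * conj (K v (t k) j) := by
  rw [prodChannel, Matrix.sum_apply]
  have h1 : ∀ u : Fin n → ι,
      ((krausAt K u * Matrix.single (fun _ => i) (fun _ => j) 1 * (krausAt K u)ᴴ :
          Matrix (Fin n → Fin d) (Fin n → Fin d) ℂ)) s t
        = ∏ k : Fin n, (K (u k) (s k) i * conj (K (u k) (t k) j)) := by
    intro u
    rw [mul_std_mul]
    simp only [krausAt, Matrix.of_apply]
    rw [map_prod, Finset.prod_mul_distrib]
  rw [Finset.sum_congr rfl fun u _ => h1 u, ← Fintype.piFinset_univ,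
    ← Finset.prod_univ_sum (fun _ => (Finset.univ : Finset ι))
      (fun k v => K v (s k) i * conj (K v (t k) j))]

variable {p g x : ℝ}

lemma site00 (hp : p ∈ Set.Icc (0:ℝ) 1) (a b : Fin 2) :
    ∑ v : Fin 3, ddKraus p g v a 0 * conj (ddKraus p g v b 0) =
      if a = 0 ∧ b = 0 then 1 else 0 := by
  have h1 : (Real.sqrt (1-p) : ℂ) * (Real.sqrt (1-p) : ℂ) = 1 - (p : ℂ) := by
    rw [← Complex.ofReal_mul, Real.mul_self_sqrt (by linarith [hp.2])]; push_cast; ring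
  have h2 : (Real.sqrt p : ℂ) * (Real.sqrt p : ℂ) = (p : ℂ) := by
    rw [← Complex.ofReal_mul, Real.mul_self_sqrt hp.1]
  fin_cases a <;> fin_cases b <;>
    simp [ddKraus, Fin.sum_univ_three, Matrix.smul_apply, _root_.map_mul, h1, h2,
      Complex.conj_ofReal] <;>
    linear_combination h1 + h2

lemma site01 (hp : p ∈ Set.Icc (0:ℝ) 1) (a b : Fin 2) :
    ∑ v : Fin 3, ddKraus p g v a 0 * conj (ddKraus p g v b 1) =
      if a = 0 ∧ b = 1 then (((1 - 2*p) * Real.sqrt (1-g) : ℝ) : ℂ) else 0 := by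
  have h1 : (Real.sqrt (1-p) : ℂ) * (Real.sqrt (1-p) : ℂ) = 1 - (p : ℂ) := by
    rw [← Complex.ofReal_mul, Real.mul_self_sqrt (by linarith [hp.2])]; push_cast; ring
  have h2 : (Real.sqrt p : ℂ) * (Real.sqrt p : ℂ) = (p : ℂ) := by
    rw [← Complex.ofReal_mul, Real.mul_self_sqrt hp.1]
  fin_cases a <;> fin_cases b <;>
    simp [ddKraus, Fin.sum_univ_three, Matrix.smul_apply, _root_.map_mul,
      Complex.conj_ofReal] <;>
    push_cast <;>
    linear_combination (Real.sqrt (1-g) : ℂ) * h1 - (Real.sqrt (1-g) : ℂ) * h2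

lemma site10 (hp : p ∈ Set.Icc (0:ℝ) 1) (a b : Fin 2) :
    ∑ v : Fin 3, ddKraus p g v a 1 * conj (ddKraus p g v b 0) =
      if a = 1 ∧ b = 0 then (((1 - 2*p) * Real.sqrt (1-g) : ℝ) : ℂ) else 0 := by
  have h1 : (Real.sqrt (1-p) : ℂ) * (Real.sqrt (1-p) : ℂ) = 1 - (p : ℂ) := by
    rw [← Complex.ofReal_mul, Real.mul_self_sqrt (by linarith [hp.2])]; push_cast; ring
  have h2 : (Real.sqrt p : ℂ) * (Real.sqrt p : ℂ) = (p : ℂ) := by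
    rw [← Complex.ofReal_mul, Real.mul_self_sqrt hp.1]
  fin_cases a <;> fin_cases b <;>
    simp [ddKraus, Fin.sum_univ_three, Matrix.smul_apply, _root_.map_mul,
      Complex.conj_ofReal] <;>
    push_cast <;>
    linear_combination (Real.sqrt (1-g) : ℂ) * h1 - (Real.sqrt (1-g) : ℂ) * h2

lemma site11 (hp : p ∈ Set.Icc (0:ℝ) 1) (hg : g ∈ Set.Icc (0:ℝ) 1) (a b : Fin 2) :
    ∑ v : Fin 3, ddKraus p g v a 1 * conj (ddKraus p g v b 1) =
      if a = b then (if a = 0 then ((g:ℝ) : ℂ) else ((1-g : ℝ) : ℂ)) else 0 := by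
  have h1 : (Real.sqrt (1-p) : ℂ) * (Real.sqrt (1-p) : ℂ) = 1 - (p : ℂ) := by
    rw [← Complex.ofReal_mul, Real.mul_self_sqrt (by linarith [hp.2])]; push_cast; ring
  have h2 : (Real.sqrt p : ℂ) * (Real.sqrt p : ℂ) = (p : ℂ) := by
    rw [← Complex.ofReal_mul, Real.mul_self_sqrt hp.1]
  have h3 : (Real.sqrt g : ℂ) * (Real.sqrt g : ℂ) = (g : ℂ) := by
    rw [← Complex.ofReal_mul, Real.mul_self_sqrt hg.1]
  have h4 : (Real.sqrt (1-g) : ℂ) * (Real.sqrt (1-g) : ℂ) = 1 - (g : ℂ) := by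
    rw [← Complex.ofReal_mul, Real.mul_self_sqrt (by linarith [hg.2])]; push_cast; ring
  fin_cases a <;> fin_cases b <;>
    simp [ddKraus, Fin.sum_univ_three, Matrix.smul_apply, _root_.map_mul,
      Complex.conj_ofReal] <;>
    push_cast <;>
    first
      | linear_combination h3
      | linear_combination (Real.sqrt (1-g) * Real.sqrt (1-g) : ℂ) * h1 +
          (Real.sqrt (1-g) * Real.sqrt (1-g) : ℂ) * h2 + h4

def offc (p g x : ℝ) (n : ℕ) : ℂ :=
  ((Real.sqrt (x*(1-x)) * ((1-2*p) * Real.sqrt (1-g))^n : ℝ) : ℂ)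

def dvR (g : ℝ) {n : ℕ} (s : Fin n → Fin 2) : ℝ := ∏ k, (if s k = 0 then g else 1-g)

def Mform (p g x : ℝ) (n : ℕ) :
    Matrix (Fin 2 × (Fin n → Fin 2)) (Fin 2 × (Fin n → Fin 2)) ℂ :=
  Matrix.of fun a b =>
    if a.1 = 0 then
      if b.1 = 0 then (if a.2 = (fun _ => 0) ∧ b.2 = (fun _ => 0) then (x:ℂ) else 0)
      else (if a.2 = (fun _ => 0) ∧ b.2 = (fun _ => 1) then offc p g x n else 0)
    else
      if b.1 = 0 then (if a.2 = (fun _ => 1) ∧ b.2 = (fun _ => 0) then offc p g x n else 0)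
      else (if a.2 = b.2 then (((1-x) * dvR g a.2 : ℝ) : ℂ) else 0)

lemma M_eq (hp : p ∈ Set.Icc (0:ℝ) 1) (hg : g ∈ Set.Icc (0:ℝ) 1) (hx : x ∈ Set.Icc (0:ℝ) 1)
    (n : ℕ) :
    (Matrix.of fun (a b : Fin 2 × (Fin n → Fin 2)) =>
      (Real.sqrt (![x, 1 - x] a.1 * ![x, 1 - x] b.1) : ℂ) *
        prodChannel (ddKraus p g) n
          (Matrix.single (fun _ => a.1) (fun _ => b.1) 1) a.2 b.2)
      = Mform p g x n := by
  have hx1 : (0:ℝ) ≤ 1 - x := by linarith [hx.2]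
  ext ⟨i, s⟩ ⟨j, t⟩
  simp only [Matrix.of_apply, Mform]
  rw [prodChannel_std]
  fin_cases i <;> fin_cases j <;>
    simp only [Fin.mk_zero, Fin.mk_one, Matrix.cons_val_zero, Matrix.cons_val_one,
      Matrix.head_cons, if_true, eq_self_iff_true, one_ne_zero, if_false]
  · -- 0 0
    rw [Finset.prod_congr rfl fun k _ => site00 hp (s k) (t k), Finset.prod_boole]
    have hsp : (∀ k ∈ Finset.univ, s k = 0 ∧ t k = 0) ↔
        ((s = fun _ => 0) ∧ (t = fun _ => 0)) := by
      simp [funext_iff, forall_and]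
    simp only [hsp]
    split
    · rw [Real.sqrt_mul_self hx.1]; ring
    · ring
  · -- 0 1
    rw [Finset.prod_congr rfl fun k _ => site01 hp (s k) (t k)]
    rw [Finset.prod_congr rfl fun k _ =>
      show (if s k = 0 ∧ t k = 1 then (((1 - 2*p) * Real.sqrt (1-g) : ℝ) : ℂ) else 0)
        = (((1 - 2*p) * Real.sqrt (1-g) : ℝ) : ℂ) * (if s k = 0 ∧ t k = 1 then 1 else 0) from
        by split <;> ring]
    rw [Finset.prod_mul_distrib, Finset.prod_const, Finset.prod_boole]
    have hsp : (∀ k ∈ Finset.univ, s k = 0 ∧ t k = 1) ↔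
        ((s = fun _ => 0) ∧ (t = fun _ => 1)) := by
      simp [funext_iff, forall_and]
    simp only [hsp, Finset.card_univ, Fintype.card_fin]
    split
    · rw [offc]; push_cast; ring
    · ring
  · -- 1 0
    rw [Finset.prod_congr rfl fun k _ => site10 hp (s k) (t k)]
    rw [Finset.prod_congr rfl fun k _ =>
      show (if s k = 1 ∧ t k = 0 then (((1 - 2*p) * Real.sqrt (1-g) : ℝ) : ℂ) else 0)
        = (((1 - 2*p) * Real.sqrt (1-g) : ℝ) : ℂ) * (if s k = 1 ∧ t k = 0 then 1 else 0) from
        by split <;> ring]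
    rw [Finset.prod_mul_distrib, Finset.prod_const, Finset.prod_boole]
    have hsp : (∀ k ∈ Finset.univ, s k = 1 ∧ t k = 0) ↔
        ((s = fun _ => 1) ∧ (t = fun _ => 0)) := by
      simp [funext_iff, forall_and]
    simp only [hsp, Finset.card_univ, Fintype.card_fin]
    split
    · rw [offc]; push_cast; ring
    · ring
  · -- 1 1
    rw [Finset.prod_congr rfl fun k _ => site11 hp hg (s k) (t k)]
    rw [Finset.prod_congr rfl fun k _ =>
      show (if s k = t k then (if s k = 0 then ((g:ℝ) : ℂ) else ((1-g:ℝ) : ℂ)) else 0)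
        = (if s k = t k then 1 else 0) *
            (if s k = 0 then ((g:ℝ) : ℂ) else ((1-g:ℝ) : ℂ)) from by split <;> ring]
    rw [Finset.prod_mul_distrib, Finset.prod_boole]
    have hsp : (∀ k ∈ Finset.univ, s k = t k) ↔ s = t := by simp [funext_iff]
    have hdv : (((1-x) * dvR g s : ℝ) : ℂ)
        = ((1-x : ℝ) : ℂ) * ∏ k, (if s k = 0 then ((g:ℝ) : ℂ) else ((1-g:ℝ) : ℂ)) := by
      rw [dvR]; push_cast [apply_ite (Complex.ofReal)]; ring
    simp only [hsp]
    split
    · rw [hdv, Real.sqrt_mul_self hx1]; ring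
    · ring

lemma charpoly_diag {m : Type*} [Fintype m] [DecidableEq m] (d : m → ℂ) :
    (Matrix.diagonal d).charpoly = ∏ i, (X - C (d i)) := by
  rw [Matrix.charpoly]
  have h : charmatrix (Matrix.diagonal d) = Matrix.diagonal (fun i => X - C (d i)) := by
    ext i j
    by_cases h : i = j
    · subst h; simp [charmatrix_apply_eq]
    · simp [charmatrix_apply_ne _ _ _ h, Matrix.diagonal_apply_ne _ h]
  rw [h, Matrix.det_diagonal]

lemma charpoly_two (a b c d : ℂ) :
    (!![a,b;c,d]).charpoly = X^2 - C (a + d) * X + C (a*d - b*c) := by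
  rw [Matrix.charpoly, Matrix.det_fin_two]
  have h01 : (0 : Fin 2) ≠ 1 := by decide
  have h10 : (1 : Fin 2) ≠ 0 := by decide
  rw [charmatrix_apply_eq, charmatrix_apply_eq, charmatrix_apply_ne _ _ _ h01,
    charmatrix_apply_ne _ _ _ h10]
  simp only [Matrix.cons_val', Matrix.cons_val_zero, Matrix.cons_val_one, Matrix.head_cons,
    Matrix.head_fin_const, Matrix.empty_val', Matrix.cons_val_fin_one, map_add, map_sub, _root_.map_mul]
  simp only [show !![a,b;c,d] 0 0 = a from rfl, show !![a,b;c,d] 0 1 = b from rfl,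
    show !![a,b;c,d] 1 0 = c from rfl, show !![a,b;c,d] 1 1 = d from rfl]
  ring

def wt {n : ℕ} (s : Fin n → Fin 2) : ℕ := (Finset.univ.filter (fun k => s k = 1)).card

lemma wt_le {n : ℕ} (s : Fin n → Fin 2) : wt s ≤ n :=
  le_trans (Finset.card_filter_le _ _) (by simp)

lemma wt_eq_n_iff {n : ℕ} (s : Fin n → Fin 2) : wt s = n ↔ s = fun _ => 1 := by
  constructor
  · intro h
    have h2 : (Finset.univ.filter (fun k => s k = 1)) = Finset.univ :=
      Finset.eq_univ_of_card _ (by simpa [wt] using h)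
    funext k
    have := Finset.mem_filter.mp (h2 ▸ Finset.mem_univ k)
    exact this.2
  · intro h; subst h; simp [wt]

lemma dvR_wt {n : ℕ} (g : ℝ) (s : Fin n → Fin 2) :
    (∏ k, (if s k = 0 then g else 1-g)) = g ^ (n - wt s) * (1-g) ^ (wt s) := by
  have hv : ∀ v : Fin 2, (¬ v = 0) ↔ v = 1 := by decide
  rw [Finset.prod_ite (fun _ => g) (fun _ => 1-g), Finset.prod_const, Finset.prod_const]
  have hfe : Finset.univ.filter (fun k => ¬ s k = 0) = Finset.univ.filter (fun k => s k = 1) :=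
    Finset.filter_congr (fun k _ => hv (s k))
  have hsum := Finset.card_filter_add_card_filter_not
    (s := (Finset.univ : Finset (Fin n))) (p := fun k => s k = 0)
  rw [hfe] at hsum
  simp only [Finset.card_univ, Fintype.card_fin] at hsum
  have : (Finset.univ.filter (fun k => s k = 0)).card = n - wt s := by
    unfold wt; omega
  rw [this, hfe]; rfl

lemma card_wt_eq (n w : ℕ) :
    ((Finset.univ : Finset (Fin n → Fin 2)).filter fun s => wt s = w).card = n.choose w := by
  have hpc : (Finset.powersetCard w (Finset.univ : Finset (Fin n))).card = n.choose w := by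
    simp [Finset.card_powersetCard]
  rw [← hpc]
  apply Finset.card_bij' (fun s _ => Finset.univ.filter fun k => s k = 1)
    (fun T _ => fun k => if k ∈ T then 1 else 0)
  · intro s hs
    funext k
    have : ∀ v : Fin 2, (if v = 1 then (1:Fin 2) else 0) = v := by decide
    simp only [Finset.mem_filter, Finset.mem_univ, true_and]
    exact this (s k)
  · intro T hT
    ext k
    simp only [Finset.mem_filter, Finset.mem_univ, true_and]
    by_cases h : k ∈ T <;> simp [h]
  · intro s hs
    rw [Finset.mem_powersetCard]
    exact ⟨Finset.subset_univ _, (Finset.mem_filter.mp hs).2⟩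
  · intro T hT
    rw [Finset.mem_filter]
    refine ⟨Finset.mem_univ _, ?_⟩
    have h1 : ∀ k, ((if k ∈ T then (1:Fin 2) else 0) = 1) ↔ k ∈ T := by
      intro k; by_cases h : k ∈ T <;> simp [h]
    unfold wt
    rw [Finset.filter_congr (fun k _ => h1 k), Finset.filter_mem_eq_inter, Finset.univ_inter]
    exact (Finset.mem_powersetCard.mp hT).2

lemma prod_erase_const1 {n : ℕ} (F : ℕ → Polynomial ℂ) :
    ∏ s ∈ (Finset.univ : Finset (Fin n → Fin 2)).erase (fun _ => 1), F (wt s)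
      = ∏ w ∈ Finset.range n, (F w)^(n.choose w) := by
  have hmaps : ∀ s ∈ (Finset.univ : Finset (Fin n → Fin 2)).erase (fun _ => 1), wt s ∈ Finset.range n := by
    intro s hs
    rw [Finset.mem_range]
    rcases Nat.lt_or_ge (wt s) n with h | h
    · exact h
    · exact absurd ((wt_eq_n_iff s).mp (le_antisymm (wt_le s) h))
        (Finset.mem_erase.mp hs).1
  rw [← Finset.prod_fiberwise_of_maps_to hmaps (fun s => F (wt s))]
  apply Finset.prod_congr rfl
  intro w hw
  have hfib : ∀ s ∈ ((Finset.univ : Finset (Fin n → Fin 2)).erase (fun _ => 1)).filter (fun s => wt s = w),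
      F (wt s) = F w := by
    intro s hs; rw [(Finset.mem_filter.mp hs).2]
  rw [Finset.prod_congr rfl hfib, Finset.prod_const]
  congr 1
  have heq : ((Finset.univ : Finset (Fin n → Fin 2)).erase (fun _ => 1)).filter (fun s => wt s = w)
      = Finset.univ.filter (fun s => wt s = w) := by
    ext s
    simp only [Finset.mem_filter, Finset.mem_erase, Finset.mem_univ, and_true, true_and]
    constructor
    · exact fun h => h.2
    · intro h
      refine ⟨fun hc => ?_, h⟩
      rw [← wt_eq_n_iff s] at hc
      rw [Finset.mem_range] at hw
      omega
  rw [heq, card_wt_eq]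


lemma dvR_wt' {n : ℕ} (g : ℝ) (s : Fin n → Fin 2) :
    dvR g s = g ^ (n - wt s) * (1-g) ^ (wt s) := dvR_wt g s

section main
variable {p g x : ℝ} {n : ℕ}

abbrev Pp (n : ℕ) : (Fin 2 × (Fin n → Fin 2)) → Prop :=
  fun a => a = ((0:Fin 2), fun _ => (0:Fin 2)) ∨ a = ((1:Fin 2), fun _ => (1:Fin 2))

def dval (g x : ℝ) {n : ℕ} (a : Fin 2 × (Fin n → Fin 2)) : ℂ :=
  if a.1 = 0 then 0 else (((1-x) * dvR g a.2 : ℝ) : ℂ)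

lemma Mform_zero (a b : Fin 2 × (Fin n → Fin 2)) (hab : a ≠ b)
    (h : ¬ Pp n a ∨ ¬ Pp n b) : Mform p g x n a b = 0 := by
  obtain ⟨i, s⟩ := a
  obtain ⟨j, t⟩ := b
  fin_cases i <;> fin_cases j <;>
    simp only [Mform, Matrix.of_apply, Fin.mk_zero, Fin.mk_one, if_true, eq_self_iff_true,
      one_ne_zero, if_false]
  · rw [if_neg]; rintro ⟨rfl, rfl⟩; exact hab rfl
  · rw [if_neg]; rintro ⟨rfl, rfl⟩
    rcases h with h | h
    · exact h (Or.inl rfl)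
    · exact h (Or.inr rfl)
  · rw [if_neg]; rintro ⟨rfl, rfl⟩
    rcases h with h | h
    · exact h (Or.inr rfl)
    · exact h (Or.inl rfl)
  · rw [if_neg]; rintro rfl; exact hab rfl

lemma Mform_diag_val (a : Fin 2 × (Fin n → Fin 2)) (ha : ¬ Pp n a) :
    Mform p g x n a a = dval g x a := by
  obtain ⟨i, s⟩ := a
  fin_cases i <;>
    simp only [Mform, Matrix.of_apply, dval, Fin.mk_zero, Fin.mk_one, if_true, eq_self_iff_true,
      one_ne_zero, if_false, and_self]
  · rw [if_neg]
    intro hc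
    exact ha (Or.inl (by rw [hc]; rfl))


lemma charpoly_Mform (hp : p ∈ Set.Icc (0:ℝ) 1) (hg : g ∈ Set.Icc (0:ℝ) 1)
    (hx : x ∈ Set.Icc (0:ℝ) 1) (hn : 1 ≤ n) :
    (Mform p g x n).charpoly =
      X ^ (2 ^ n - 1) *
        (X ^ 2 - C (((x + (1 - x) * (1 - g) ^ n : ℝ)) : ℂ) * X +
          C (((x * (1 - x) * ((1 - g) ^ n - ((1 - 2 * p) ^ 2 * (1 - g)) ^ n) : ℝ)) : ℂ)) *
      ∏ w ∈ Finset.range n,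
        (X - C (((1 - x) * g ^ (n - w) * (1 - g) ^ w : ℝ) : ℂ)) ^ n.choose w := by
  have hx1 : (0:ℝ) ≤ 1 - x := by linarith [hx.2]
  have hg1 : (0:ℝ) ≤ 1 - g := by linarith [hg.2]
  set A : Matrix {a // Pp n a} {a // Pp n a} ℂ :=
    Matrix.of (fun a b => Mform p g x n a.1 b.1) with hA
  set dsub : {a // ¬ Pp n a} → ℂ := fun a => dval g x a.1 with hdsub
  have hsub : (Mform p g x n).submatrix (Equiv.sumCompl (Pp n)) (Equiv.sumCompl (Pp n))
      = fromBlocks A 0 0 (Matrix.diagonal dsub) := by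
    ext a b
    cases a with
    | inl a =>
      cases b with
      | inl b => simp [Matrix.submatrix_apply, hA, fromBlocks]
      | inr b =>
        simp only [Matrix.submatrix_apply, Equiv.sumCompl_apply_inl, Equiv.sumCompl_apply_inr,
          Matrix.fromBlocks_apply₁₂, Matrix.zero_apply]
        exact Mform_zero _ _ (fun h => b.2 (h ▸ a.2)) (Or.inr b.2)
    | inr a =>
      cases b with
      | inl b =>
        simp only [Matrix.submatrix_apply, Equiv.sumCompl_apply_inl, Equiv.sumCompl_apply_inr,
          Matrix.fromBlocks_apply₂₁, Matrix.zero_apply]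
        exact Mform_zero _ _ (fun h => a.2 (h.symm ▸ b.2)) (Or.inl a.2)
      | inr b =>
        simp only [Matrix.submatrix_apply, Equiv.sumCompl_apply_inr,
          Matrix.fromBlocks_apply₂₂]
        by_cases hab : a = b
        · subst hab
          rw [Matrix.diagonal_apply_eq]
          exact Mform_diag_val _ a.2
        · rw [Matrix.diagonal_apply_ne _ hab]
          exact Mform_zero _ _ (fun h => hab (Subtype.ext h)) (Or.inl a.2)
  have hre : (Mform p g x n).charpoly = (fromBlocks A 0 0 (Matrix.diagonal dsub)).charpoly := by
    rw [← Matrix.charpoly_reindex (Equiv.sumCompl (Pp n)).symm (Mform p g x n)]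
    rw [Matrix.reindex_apply, Equiv.symm_symm, hsub]
  rw [hre, Matrix.charpoly_fromBlocks_zero₂₁]
  -- charpoly of A
  have hAc : A.charpoly =
      X ^ 2 - C (((x + (1 - x) * (1 - g) ^ n : ℝ)) : ℂ) * X +
        C (((x * (1 - x) * ((1 - g) ^ n - ((1 - 2 * p) ^ 2 * (1 - g)) ^ n) : ℝ)) : ℂ) := by
    have hd1 : dvR (n := n) g (fun _ => 1) = (1-g)^n := by simp [dvR]
    let e2 : Fin 2 ≃ {a // Pp n a} :=
      { toFun := ![⟨((0:Fin 2), fun _ => 0), Or.inl rfl⟩, ⟨((1:Fin 2), fun _ => 1), Or.inr rfl⟩]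
        invFun := fun a => if a.1.1 = 0 then 0 else 1
        left_inv := by intro i; fin_cases i <;> simp
        right_inv := by
          rintro ⟨a, h | h⟩ <;> subst h <;> simp }
    have hA2 : A.submatrix e2 e2 =
        !![(x:ℂ), offc p g x n; offc p g x n, (((1-x)*(1-g)^n : ℝ):ℂ)] := by
      ext i j
      fin_cases i <;> fin_cases j <;>
        simp [Matrix.submatrix_apply, e2, hA, Mform, hd1]
    have := Matrix.charpoly_reindex e2.symm A
    rw [Matrix.reindex_apply, Equiv.symm_symm, hA2] at this
    rw [← this, charpoly_two]
    have hoffsq : (Real.sqrt (x*(1-x)) * ((1-2*p)*Real.sqrt (1-g))^n)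
          * (Real.sqrt (x*(1-x)) * ((1-2*p)*Real.sqrt (1-g))^n)
        = x*(1-x)*(((1-2*p)^2*(1-g))^n) := by
      have hc : ((1-2*p)*Real.sqrt (1-g))^2 = (1-2*p)^2*(1-g) := by
        rw [mul_pow, Real.sq_sqrt hg1]
      have h1 : Real.sqrt (x*(1-x)) * Real.sqrt (x*(1-x)) = x*(1-x) :=
        Real.mul_self_sqrt (mul_nonneg hx.1 hx1)
      have h2 : ((1-2*p)*Real.sqrt (1-g))^n * ((1-2*p)*Real.sqrt (1-g))^n
          = ((1-2*p)^2*(1-g))^n := by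
        rw [← mul_pow, ← hc, sq]
      calc (Real.sqrt (x*(1-x)) * ((1-2*p)*Real.sqrt (1-g))^n)
            * (Real.sqrt (x*(1-x)) * ((1-2*p)*Real.sqrt (1-g))^n)
          = (Real.sqrt (x*(1-x)) * Real.sqrt (x*(1-x)))
              * (((1-2*p)*Real.sqrt (1-g))^n * ((1-2*p)*Real.sqrt (1-g))^n) := by ring
        _ = x*(1-x)*(((1-2*p)^2*(1-g))^n) := by rw [h1, h2]
    have e1 : (x:ℂ) + (((1-x)*(1-g)^n : ℝ):ℂ) = (((x + (1 - x) * (1 - g) ^ n : ℝ)) : ℂ) := by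
      push_cast; ring
    have e2' : (x:ℂ) * (((1-x)*(1-g)^n : ℝ):ℂ) - offc p g x n * offc p g x n
        = (((x * (1 - x) * ((1 - g) ^ n - ((1 - 2 * p) ^ 2 * (1 - g)) ^ n) : ℝ)) : ℂ) := by
      rw [offc, ← Complex.ofReal_mul, ← Complex.ofReal_mul, ← Complex.ofReal_sub]
      exact Complex.ofReal_inj.mpr (by linear_combination -hoffsq)
    rw [e1, e2']
  rw [hAc]
  -- charpoly of the diagonal part
  rw [charpoly_diag]
  have hsubty : ∏ a : {a // ¬ Pp n a}, (X - C (dsub a))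
      = ∏ a ∈ Finset.univ.filter (fun a => ¬ Pp n a), (X - C (dval g x a)) :=
    (Finset.prod_subtype (p := fun a => ¬ Pp n a)
      (Finset.univ.filter fun a => ¬ Pp n a) (fun a => by simp)
      (fun a => X - C (dval g x a))).symm
  rw [hsubty]
  have hsplit : (Finset.univ.filter fun a : Fin 2 × (Fin n → Fin 2) => ¬ Pp n a)
      = ({(0:Fin 2)} ×ˢ ((Finset.univ : Finset (Fin n → Fin 2)).erase (fun _ => 0)))
        ∪ ({(1:Fin 2)} ×ˢ ((Finset.univ : Finset (Fin n → Fin 2)).erase (fun _ => 1))) := by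
    ext a
    obtain ⟨i, s⟩ := a
    fin_cases i <;>
      simp [Prod.ext_iff, Finset.mem_union, Finset.mem_product, Finset.mem_erase]
  have hdisj : Disjoint
      ({(0:Fin 2)} ×ˢ ((Finset.univ : Finset (Fin n → Fin 2)).erase (fun _ => 0)))
      ({(1:Fin 2)} ×ˢ ((Finset.univ : Finset (Fin n → Fin 2)).erase (fun _ => 1))) := by
    rw [Finset.disjoint_left]
    rintro ⟨i, s⟩ ha hb
    rw [Finset.mem_product, Finset.mem_singleton] at ha hb
    rw [ha.1] at hb
    exact absurd hb.1 (by decide)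
  rw [hsplit, Finset.prod_union hdisj, Finset.prod_product, Finset.prod_product,
    Finset.prod_singleton, Finset.prod_singleton]
  have hfirst : ∏ s ∈ (Finset.univ : Finset (Fin n → Fin 2)).erase (fun _ => 0),
      (X - C (dval g x ((0:Fin 2), s))) = X ^ (2^n - 1) := by
    have : ∀ s : Fin n → Fin 2, dval g x ((0:Fin 2), s) = 0 := fun s => by simp [dval]
    simp only [this, map_zero, sub_zero, Finset.prod_const]
    rw [Finset.card_erase_of_mem (Finset.mem_univ _), Finset.card_univ]
    simp [Fintype.card_fun]
  have hsecond : ∏ s ∈ (Finset.univ : Finset (Fin n → Fin 2)).erase (fun _ => 1),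
      (X - C (dval g x ((1:Fin 2), s)))
      = ∏ w ∈ Finset.range n,
          (X - C (((1 - x) * g ^ (n - w) * (1 - g) ^ w : ℝ) : ℂ)) ^ n.choose w := by
    rw [Finset.prod_congr rfl (fun s _ => by
      rw [show dval g x ((1:Fin 2), s)
          = (((1 - x) * g ^ (n - wt s) * (1 - g) ^ (wt s) : ℝ) : ℂ) from by
        simp only [dval]
        rw [if_neg (by decide), dvR_wt']
        push_cast; ring])]
    exact prod_erase_const1 (fun w => X - C (((1 - x) * g ^ (n - w) * (1 - g) ^ w : ℝ) : ℂ))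
  rw [hfirst, hsecond]
  ring

end main

/-- The characteristic polynomial of the purified channel output `M` of the weighted
repetition code through `n` copies of the damping-dephasing channel `F_{p,g}`. -/
theorem stmt14 (p g : ℝ) (hp : p ∈ Set.Icc (0 : ℝ) 1) (hg : g ∈ Set.Icc (0 : ℝ) 1)
    (x : ℝ) (hx : x ∈ Set.Icc (0 : ℝ) 1) (n : ℕ) (hn : 1 ≤ n)
    (M : Matrix (Fin 2 × (Fin n → Fin 2)) (Fin 2 × (Fin n → Fin 2)) ℂ)
    (hM : M = Matrix.of fun a b =>
      (Real.sqrt (![x, 1 - x] a.1 * ![x, 1 - x] b.1) : ℂ) *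
        prodChannel (ddKraus p g) n
          (Matrix.single (fun _ => a.1) (fun _ => b.1) 1) a.2 b.2)
    (α β : ℝ) (hα : α = x + (1 - x) * (1 - g) ^ n)
    (hβ : β = x * (1 - x) * ((1 - g) ^ n - ((1 - 2 * p) ^ 2 * (1 - g)) ^ n)) :
    M.charpoly = X ^ (2 ^ n - 1) * (X ^ 2 - C ((α : ℝ) : ℂ) * X + C ((β : ℝ) : ℂ)) *
      ∏ w ∈ Finset.range n,
        (X - C (((1 - x) * g ^ (n - w) * (1 - g) ^ w : ℝ) : ℂ)) ^ n.choose w := by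
  subst hM hα hβ
  rw [M_eq hp hg hx n, charpoly_Mform hp hg hx hn]

end
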